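/- arXiv:math/0104282 — 4 statements merged into one kernel-verified Lean document; each statement's English description precedes it below -/
import Mathlib

section
/- Let p : Y → X be a covering map with Y path-connected, x ∈ X and u ∈ p⁻¹(x). Then the cardinality of the fiber p⁻¹(x) equals the index [π₁(X, x) : p₊(π₁(Y, u))] of the image of the fundamental group of Y in the fundamental group of X. -/
/-!
π₁(X, x) acts on the fiber over x by monodromy: a loop sends v to the endpoint of its lift
starting at v. The action is transitive because a path in Y from u to v projects to a loop whose
lift ends at v, and a loop fixes u exactly when its lift at u is closed, i.e. when it lies in
p₊ π₁(Y, u). Orbit–stabilizer then identifies the fiber with the cosets of p₊ π₁(Y, u).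
-/

open CategoryTheory

noncomputable def inducedHom {X Y : Type} [TopologicalSpace X] [TopologicalSpace Y]
    {f : X → Y} (hf : Continuous f) (x : X) :
    FundamentalGroup X x →* FundamentalGroup Y (f x) :=
  Functor.mapEnd ⟨x⟩
    (FundamentalGroupoid.fundamentalGroupoidFunctor.map
      (X := TopCat.of X) (Y := TopCat.of Y) (TopCat.ofHom ⟨f, hf⟩))

theorem inducedHom_eq_map {X Y : Type} [TopologicalSpace X] [TopologicalSpace Y]
    {f : X → Y} (hf : Continuous f) (x : X) :
    inducedHom hf x = FundamentalGroup.map ⟨f, hf⟩ x :=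
  rfl

namespace IsCoveringMap

variable {E X : Type*} [TopologicalSpace E] [TopologicalSpace X] {p : E → X}
  (hp : IsCoveringMap p)

theorem stabilizer_eq_range_map (e : E) :
    letI := hp.fundamentalGroupMulAction (p e)
    MulAction.stabilizer (FundamentalGroup X (p e)) (⟨e, rfl⟩ : p ⁻¹' {p e}) =
      (FundamentalGroup.map ⟨p, hp.continuous⟩ e).range := by
  let _ := hp.fundamentalGroupMulAction (p e)
  ext γ
  constructor
  · intro h
    change hp.monodromy γ ⟨e, rfl⟩ = ⟨e, rfl⟩ at h
    refine ⟨(hp.liftPathQuotient γ ⟨e, rfl⟩).cast rfl congr(($h).1).symm, ?_⟩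
    change Path.Homotopic.Quotient.map _ _ = _
    rw [Path.Homotopic.Quotient.map_cast, map_liftPathQuotient]
    exact (Path.Homotopic.Quotient.cast_cast ..).trans (Path.Homotopic.Quotient.cast_rfl_rfl γ)
  · rintro ⟨δ, rfl⟩
    exact hp.monodromy_map δ

theorem isPretransitive_fundamentalGroupMulAction [PathConnectedSpace E] (x : X) :
    letI := hp.fundamentalGroupMulAction x
    MulAction.IsPretransitive (FundamentalGroup X x) (p ⁻¹' {x}) := by
  let _ := hp.fundamentalGroupMulAction x
  refine ⟨fun e e' => ?_⟩
  let Γ : Path (e : E) e' := PathConnectedSpace.somePath _ _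
  refine ⟨(⟦(Γ.map hp.continuous).cast e.2.symm e'.2.symm⟧ : Path.Homotopic.Quotient x x), ?_⟩
  exact hp.monodromy_eq_of_map_eq ⟦Γ⟧ rfl

noncomputable def fiberEquivQuotientRangeMap [PathConnectedSpace E] (e : E) :
    p ⁻¹' {p e} ≃ FundamentalGroup X (p e) ⧸ (FundamentalGroup.map ⟨p, hp.continuous⟩ e).range :=
  letI := hp.fundamentalGroupMulAction (p e)
  haveI := hp.isPretransitive_fundamentalGroupMulAction (p e)
  (Equiv.Set.univ _).symm.trans <|
    (Equiv.setCongr (MulAction.orbit_eq_univ _ _)).symm.trans <|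
      (MulAction.orbitEquivQuotientStabilizer _ _).trans <|
        Subgroup.quotientEquivOfEq (hp.stabilizer_eq_range_map e)

end IsCoveringMap

theorem card_fiber_eq_index_general
    {X Y : Type} [TopologicalSpace X] [TopologicalSpace Y]
    [PathConnectedSpace Y]
    (p : Y → X) (hp : IsCoveringMap p) (u : Y) :
    Cardinal.mk {v : Y // p v = p u} =
      Cardinal.mk (FundamentalGroup X (p u) ⧸ (inducedHom hp.continuous u).range) := by
  rw [inducedHom_eq_map]
  exact Cardinal.mk_congr (hp.fiberEquivQuotientRangeMap u)

/-- the cardinality of the fiber of a covering map equals the index of the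
image of the fundamental group of the total space in that of the base. -/
theorem card_fiber_eq_index
    {X Y : Type} [TopologicalSpace X] [TopologicalSpace Y]
    [PathConnectedSpace X] [PathConnectedSpace Y]
    [LocallyPathConnectedSpace X] [LocallyPathConnectedSpace Y]
    (p : Y → X) (hp : IsCoveringMap p) (u : Y) :
    Cardinal.mk {v : Y // p v = p u} =
      Cardinal.mk (FundamentalGroup X (p u) ⧸ (inducedHom hp.continuous u).range) :=
  card_fiber_eq_index_general p hp u
end

section
/- Let f : U → H be a local homomorphism defined on a symmetric open connected neighborhood U of the identity of a simply connected topological group G with values in a topological group H (i.e., f(xy) = f(x)f(y) whenever x, y, xy ∈ U). Then f extends uniquely to a continuous group homomorphism f̄ : G → H. -/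
/-!
Extend `f` along paths: for a path `γ` from `1` to `g`, cut `[0, 1]` into `n` equal pieces, so
fine that every quotient `γ(s)⁻¹ γ(t)` over a piece lies in `U`, and multiply the values of `f`
on the consecutive quotients `γ(tᵢ)⁻¹ γ(tᵢ₊₁)`. Because `f` is multiplicative on `U`, the
product does not change under refinement of the partition, and it does not change under a small
perturbation of the path with fixed endpoints; sliding along a homotopy in small steps shows
that it only depends on the homotopy class of `γ`, hence, `G` being simply connected, only on
`g`. Concatenating a path to `a` with the left translate by `a` of a path to `b` shows that the
resulting map is a homomorphism. It agrees with `f` near `1` (take short paths), hence it is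
continuous and, `U` being connected, agrees with `f` on all of `U`. Uniqueness holds because a
neighbourhood of `1` generates the connected group `G`.
-/

open Filter Set Topology Uniformity unitInterval

namespace LocalHomExt

variable {G H : Type*}

structure IsLocalHomOn [MulOneClass G] [Mul H] (f : G → H) (U : Set G) : Prop where
  one_mem : (1 : G) ∈ U
  map_mul : ∀ x y, x ∈ U → y ∈ U → x * y ∈ U → f (x * y) = f x * f y

section Algebra

variable [Group G] [Group H]

def chainProd (f : G → H) (a : ℕ → G) (n : ℕ) : H :=
  ((List.range n).map fun i => f ((a i)⁻¹ * a (i + 1))).prod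

@[simp]
lemma chainProd_zero (f : G → H) (a : ℕ → G) : chainProd f a 0 = 1 := rfl

lemma chainProd_succ (f : G → H) (a : ℕ → G) (n : ℕ) :
    chainProd f a (n + 1) = chainProd f a n * f ((a n)⁻¹ * a (n + 1)) :=
  List.prod_range_succ _ n

lemma chainProd_add (f : G → H) (a : ℕ → G) (m n : ℕ) :
    chainProd f a (m + n) = chainProd f a m * chainProd f (fun i => a (m + i)) n := by
  simp [chainProd, List.range_add, Function.comp_def, Nat.add_assoc]

lemma chainProd_congr (f : G → H) {a b : ℕ → G} {n : ℕ} (h : ∀ i ≤ n, a i = b i) :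
    chainProd f a n = chainProd f b n := by
  refine congrArg List.prod (List.map_congr_left fun i hi => ?_)
  rw [List.mem_range] at hi
  rw [h i hi.le, h (i + 1) hi]

lemma chainProd_coarsen (f : G → H) (a : ℕ → G) {m n : ℕ}
    (h : ∀ k < n, chainProd f (fun i => a (k * m + i)) m = f ((a (k * m))⁻¹ * a ((k + 1) * m))) :
    chainProd f a (n * m) = chainProd f (fun k => a (k * m)) n := by
  induction n with
  | zero => simp
  | succ n ih =>
    rw [Nat.succ_mul, chainProd_add, ih fun k hk => h k (by omega), h n (by omega),
      chainProd_succ]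

namespace IsLocalHomOn

variable {f : G → H} {U : Set G}

lemma map_one (hf : IsLocalHomOn f U) : f 1 = 1 := by
  have := hf.map_mul 1 1 hf.one_mem hf.one_mem (by simpa using hf.one_mem)
  rwa [mul_one, left_eq_mul] at this

lemma map_inv (hf : IsLocalHomOn f U) {x : G} (hx : x ∈ U) (hx' : x⁻¹ ∈ U) :
    f x⁻¹ = (f x)⁻¹ := by
  refine eq_inv_of_mul_eq_one_right ?_
  rw [← hf.map_mul x x⁻¹ hx hx' (by simpa using hf.one_mem), mul_inv_cancel, hf.map_one]

lemma map_inv_mul_mul (hf : IsLocalHomOn f U) {W : Set G} (h1W : (1 : G) ∈ W)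
    (hW : ∀ x ∈ W, ∀ u ∈ W, ∀ y ∈ W, x⁻¹ * u * y ∈ U) {x u y : G}
    (hx : x ∈ W) (hu : u ∈ W) (hy : y ∈ W) :
    f (x⁻¹ * u * y) = (f x)⁻¹ * f u * f y := by
  have hxU : x ∈ U := by simpa using hW 1 h1W x hx 1 h1W
  have hx'U : x⁻¹ ∈ U := by simpa using hW x hx 1 h1W 1 h1W
  have huU : u ∈ U := by simpa using hW 1 h1W u hu 1 h1W
  have hyU : y ∈ U := by simpa using hW 1 h1W 1 h1W y hy
  have huyU : u * y ∈ U := by simpa using hW 1 h1W u hu y hy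
  rw [mul_assoc, hf.map_mul _ _ hx'U huyU (by simpa [mul_assoc] using hW x hx u hu y hy),
    hf.map_mul u y huU hyU huyU, hf.map_inv hxU hx'U, mul_assoc]

lemma chainProd_eq_of_forall_mem (hf : IsLocalHomOn f U) {a : ℕ → G} {n : ℕ}
    (h : ∀ i ≤ n, ∀ j ≤ n, (a i)⁻¹ * a j ∈ U) : chainProd f a n = f ((a 0)⁻¹ * a n) := by
  induction n with
  | zero => simp [hf.map_one]
  | succ n ih =>
    rw [chainProd_succ, ih fun i hi j hj => h i (by omega) j (by omega),
      ← hf.map_mul _ _ (h 0 (by omega) n (by omega)) (h n (by omega) (n + 1) le_rfl)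
        (by simpa [mul_assoc] using h 0 (by omega) (n + 1) le_rfl)]
    simp [mul_assoc]

lemma chainProd_eq_of_near (hf : IsLocalHomOn f U) {W : Set G} (h1W : (1 : G) ∈ W)
    (hW : ∀ x ∈ W, ∀ u ∈ W, ∀ y ∈ W, x⁻¹ * u * y ∈ U) {a b : ℕ → G} {n : ℕ}
    (h0 : b 0 = a 0) (hn : b n = a n) (ha : ∀ i < n, (a i)⁻¹ * a (i + 1) ∈ W)
    (hab : ∀ i ≤ n, (a i)⁻¹ * b i ∈ W) : chainProd f b n = chainProd f a n := by
  have key : ∀ k ≤ n, chainProd f b k = chainProd f a k * f ((a k)⁻¹ * b k) := by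
    intro k hk
    induction k with
    | zero => simp [h0, hf.map_one]
    | succ k ih =>
      have hsplit : (b k)⁻¹ * b (k + 1)
          = ((a k)⁻¹ * b k)⁻¹ * ((a k)⁻¹ * a (k + 1)) * ((a (k + 1))⁻¹ * b (k + 1)) := by
        group
      rw [chainProd_succ, chainProd_succ, ih (by omega), hsplit, hf.map_inv_mul_mul h1W hW
        (hab k (by omega)) (ha k (by omega)) (hab (k + 1) hk)]
      group
  simpa [hn, hf.map_one] using key n le_rfl

end IsLocalHomOn

end Algebra

noncomputable def gridPt (n i : ℕ) : I := projIcc 0 1 zero_le_one ((i : ℝ) / n)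

lemma coe_gridPt {n i : ℕ} (h : i ≤ n) : (gridPt n i : ℝ) = i / n := by
  rcases Nat.eq_zero_or_pos n with rfl | hn
  · simp [gridPt, Nat.le_zero.mp h]
  · rw [gridPt, projIcc_of_mem]
    exact ⟨by positivity, div_le_one_of_le₀ (by exact_mod_cast h) (Nat.cast_nonneg n)⟩

@[simp]
lemma gridPt_zero (n : ℕ) : gridPt n 0 = 0 := by
  simp [gridPt]

lemma gridPt_self {n : ℕ} (hn : n ≠ 0) : gridPt n n = 1 := by
  simp [gridPt, hn]

lemma gridPt_mul_mul {m : ℕ} (hm : m ≠ 0) (n k : ℕ) : gridPt (n * m) (k * m) = gridPt n k := by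
  simp only [gridPt, Nat.cast_mul]
  rw [mul_div_mul_right _ _ (by exact_mod_cast hm)]

lemma dist_gridPt_le (n i j : ℕ) : dist (gridPt n i) (gridPt n j) ≤ |(i : ℝ) - j| / n := by
  rw [Subtype.dist_eq, Real.dist_eq, ← Nat.abs_cast n, ← abs_div, sub_div]
  exact abs_projIcc_sub_projIcc _

lemma dist_gridPt_succ_le (n i : ℕ) : dist (gridPt n i) (gridPt n (i + 1)) ≤ 1 / n := by
  simpa using dist_gridPt_le n i (i + 1)

lemma dist_gridPt_mul_add_le {m : ℕ} (hm : m ≠ 0) (n k : ℕ) {i j : ℕ} (hi : i ≤ m)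
    (hj : j ≤ m) : dist (gridPt (n * m) (k * m + i)) (gridPt (n * m) (k * m + j)) ≤ 1 / n :=
  calc _ ≤ |((k * m + i : ℕ) : ℝ) - (k * m + j : ℕ)| / (n * m : ℕ) := dist_gridPt_le _ _ _
    _ = |(i : ℝ) - j| / (n * m) := by push_cast; ring_nf
    _ ≤ m / (n * m) := by
      gcongr
      exact abs_sub_le_of_nonneg_of_le (by positivity) (by exact_mod_cast hi) (by positivity)
        (by exact_mod_cast hj)
    _ = 1 / n := by field_simp

section Trans

variable {X : Type*} [TopologicalSpace X]

lemma trans_gridPt_of_le {x y z : X} (γ : Path x y) (δ : Path y z) {n i : ℕ} (hn : n ≠ 0)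
    (hi : i ≤ n) : (γ.trans δ) (gridPt (2 * n) i) = γ (gridPt n i) := by
  have hn' : (0 : ℝ) < n := by exact_mod_cast Nat.pos_of_ne_zero hn
  rw [← Path.extend_extends', ← Path.extend_extends', coe_gridPt (by omega), coe_gridPt hi,
    Path.extend_trans_of_le_half]
  · congr 1
    push_cast
    field_simp
  · push_cast
    rw [div_le_div_iff₀ (by positivity) two_pos]
    linarith [(Nat.cast_le (α := ℝ)).mpr hi]

lemma trans_gridPt_add {x y z : X} (γ : Path x y) (δ : Path y z) {n i : ℕ} (hn : n ≠ 0)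
    (hi : i ≤ n) : (γ.trans δ) (gridPt (2 * n) (n + i)) = δ (gridPt n i) := by
  have hn' : (0 : ℝ) < n := by exact_mod_cast Nat.pos_of_ne_zero hn
  rw [← Path.extend_extends', ← Path.extend_extends', coe_gridPt (by omega), coe_gridPt hi,
    Path.extend_trans_of_half_le]
  · congr 1
    push_cast
    field_simp
    ring
  · push_cast
    rw [le_div_iff₀ (by positivity)]
    linarith [(Nat.cast_nonneg (α := ℝ) i)]

end Trans

section Fine

variable [Group G] {X : Type*} [PseudoMetricSpace X]

def Fine (U : Set G) (φ : X → G) (n : ℕ) : Prop :=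
  0 < n ∧ ∀ p q, dist p q ≤ 1 / n → (φ p)⁻¹ * φ q ∈ U

lemma Fine.mono {U V : Set G} {φ : X → G} {n m : ℕ} (h : Fine U φ n) (hUV : U ⊆ V)
    (hnm : n ≤ m) : Fine V φ m := by
  refine ⟨h.1.trans_le hnm, fun p q hpq => hUV (h.2 p q (hpq.trans ?_))⟩
  gcongr
  exact_mod_cast h.1

lemma eventually_fine [TopologicalSpace G] [IsTopologicalGroup G] [CompactSpace X]
    {φ : X → G} (hφ : Continuous φ) {U : Set G} (hU : U ∈ 𝓝 1) :
    ∀ᶠ n in atTop, Fine U φ n := by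
  have hdiag : {p : X × X | (φ p.1)⁻¹ * φ p.2 ∈ U} ∈ 𝓤 X := by
    rw [← nhdsSet_diagonal_eq_uniformity, mem_nhdsSet_iff_forall]
    rintro ⟨x, y⟩ (rfl : x = y)
    refine ContinuousAt.preimage_mem_nhds (by fun_prop) ?_
    simpa using hU
  obtain ⟨ε, hε, hεU⟩ := Metric.mem_uniformity_dist.mp hdiag
  obtain ⟨N, hN⟩ := exists_nat_one_div_lt hε
  filter_upwards [eventually_ge_atTop (N + 1)] with n hn
  refine ⟨by omega, fun p q hpq => hεU (hpq.trans_lt (lt_of_le_of_lt ?_ hN))⟩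
  gcongr
  exact_mod_cast hn

end Fine

section Develop

variable [Group G] [Group H]

noncomputable def gridProd (f : G → H) (γ : I → G) (n : ℕ) : H :=
  chainProd f (fun i => γ (gridPt n i)) n

namespace IsLocalHomOn

variable {f : G → H} {U : Set G}

lemma gridProd_refine (hf : IsLocalHomOn f U) {γ : I → G} {n : ℕ} (hγ : Fine U γ n) {m : ℕ}
    (hm : m ≠ 0) : gridProd f γ (n * m) = gridProd f γ n := by
  have hblock : ∀ k < n, ∀ i ≤ m, ∀ j ≤ m,
      (γ (gridPt (n * m) (k * m + i)))⁻¹ * γ (gridPt (n * m) (k * m + j)) ∈ U :=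
    fun k _ i hi j hj => hγ.2 _ _ (dist_gridPt_mul_add_le hm n k hi hj)
  unfold gridProd
  rw [chainProd_coarsen]
  · simp only [gridPt_mul_mul hm]
  · intro k hk
    rw [hf.chainProd_eq_of_forall_mem (hblock k hk), Nat.add_zero, Nat.succ_mul]

lemma gridProd_eq_of_fine (hf : IsLocalHomOn f U) {γ : I → G} {n n' : ℕ} (hn : Fine U γ n)
    (hn' : Fine U γ n') : gridProd f γ n = gridProd f γ n' := by
  rw [← hf.gridProd_refine hn hn'.1.ne', ← hf.gridProd_refine hn' hn.1.ne', Nat.mul_comm]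

lemma gridProd_eq_of_near (hf : IsLocalHomOn f U) {W : Set G} (h1W : (1 : G) ∈ W)
    (hW : ∀ x ∈ W, ∀ u ∈ W, ∀ y ∈ W, x⁻¹ * u * y ∈ U) {γ γ' : I → G} {n : ℕ}
    (h0 : γ' 0 = γ 0) (h1 : γ' 1 = γ 1) (hγ : Fine W γ n) (hγγ' : ∀ t, (γ t)⁻¹ * γ' t ∈ W) :
    gridProd f γ' n = gridProd f γ n :=
  hf.chainProd_eq_of_near h1W hW (by simpa using h0) (by simpa [gridPt_self hγ.1.ne'] using h1)
    (fun i _ => hγ.2 _ _ (dist_gridPt_succ_le n i)) (fun i _ => hγγ' _)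

end IsLocalHomOn

/-- By `gridProd_eq_of_fine` any fine scale gives the same value; the least one is taken (if
there is none, `sInf ∅ = 0` and the junk value is `1`). -/
noncomputable def develop (f : G → H) (U : Set G) (γ : I → G) : H :=
  gridProd f γ (sInf {n | Fine U γ n})

namespace IsLocalHomOn

variable {f : G → H} {U : Set G}

lemma develop_eq (hf : IsLocalHomOn f U) {γ : I → G} {n : ℕ} (hn : Fine U γ n) :
    develop f U γ = gridProd f γ n :=
  hf.gridProd_eq_of_fine (Nat.sInf_mem (s := {n | Fine U γ n}) ⟨n, hn⟩) hn

lemma develop_eq_of_forall_mem (hf : IsLocalHomOn f U) {γ : I → G}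
    (hγ : ∀ s t, (γ s)⁻¹ * γ t ∈ U) : develop f U γ = f ((γ 0)⁻¹ * γ 1) := by
  rw [hf.develop_eq (n := 1) ⟨one_pos, fun s t _ => hγ s t⟩, gridProd, chainProd_succ,
    chainProd_zero, one_mul, zero_add, gridPt_zero, gridPt_self one_ne_zero]

end IsLocalHomOn

lemma develop_mul_left (f : G → H) (U : Set G) (a : G) (γ : I → G) :
    develop f U (fun t => a * γ t) = develop f U γ := by
  simp [develop, gridProd, chainProd, Fine, mul_assoc]

end Develop

section Paths

variable [TopologicalSpace G] [Group G] [Group H]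

lemma gridProd_trans (f : G → H) {x y z : G} (γ : Path x y) (δ : Path y z) (n : ℕ) :
    gridProd f (γ.trans δ) (2 * n) = gridProd f γ n * gridProd f δ n := by
  rcases eq_or_ne n 0 with rfl | hn
  · simp [gridProd]
  have hsplit := chainProd_add f (fun i => (γ.trans δ) (gridPt (2 * n) i)) n n
  rw [← two_mul] at hsplit
  rw [gridProd, hsplit]
  congr 1
  · exact chainProd_congr f fun i hi => trans_gridPt_of_le γ δ hn hi
  · exact chainProd_congr f fun i hi => trans_gridPt_add γ δ hn hi

variable [IsTopologicalGroup G]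

lemma exists_nhds_one_inv_mul_mul_mem {U : Set G} (hU : U ∈ 𝓝 1) :
    ∃ W ∈ 𝓝 (1 : G), ∀ x ∈ W, ∀ u ∈ W, ∀ y ∈ W, x⁻¹ * u * y ∈ U := by
  obtain ⟨V, hV, hVU⟩ := exists_nhds_one_split4 hU
  refine ⟨V ∩ V⁻¹, inter_mem hV (inv_mem_nhds_one G hV), fun x hx u hu y hy => ?_⟩
  simpa using hVU hx.2 hu.1 hy.1 (mem_of_mem_nhds hV)

namespace IsLocalHomOn

variable {f : G → H} {U : Set G}

lemma develop_eq_of_homotopic (hf : IsLocalHomOn f U) (hU : U ∈ 𝓝 1) {x y : G}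
    {γ₀ γ₁ : Path x y} (h : γ₀.Homotopic γ₁) : develop f U γ₀ = develop f U γ₁ := by
  obtain ⟨F⟩ := h
  obtain ⟨W, hW1, hW⟩ := exists_nhds_one_inv_mul_mul_mem hU
  have h1W : (1 : G) ∈ W := mem_of_mem_nhds hW1
  have hWU : W ⊆ U := fun w hw => by simpa using hW 1 h1W w hw 1 h1W
  obtain ⟨m, hm⟩ := (eventually_fine F.continuous hW1).exists
  have hslice : ∀ s, Fine W (fun t => F (s, t)) m := fun s =>
    ⟨hm.1, fun t t' htt' => hm.2 (s, t) (s, t') (by simpa [Prod.dist_eq] using htt')⟩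
  have hchain : ∀ j, gridProd f (fun t => F (gridPt m j, t)) m = gridProd f γ₀ m := by
    intro j
    induction j with
    | zero => simp
    | succ j ih =>
      rw [← ih]
      refine hf.gridProd_eq_of_near h1W hW (by simp) (by simp) (hslice _) fun t => hm.2 _ _ ?_
      simpa [Prod.dist_eq] using dist_gridPt_succ_le m j
  have hγ₀ : Fine U γ₀ m := by simpa using (hslice 0).mono hWU le_rfl
  have hγ₁ : Fine U γ₁ m := by simpa using (hslice 1).mono hWU le_rfl
  rw [hf.develop_eq hγ₀, hf.develop_eq hγ₁, ← hchain m]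
  simp [gridPt_self hm.1.ne']

lemma develop_trans (hf : IsLocalHomOn f U) (hU : U ∈ 𝓝 1) {x y z : G} (γ : Path x y)
    (δ : Path y z) : develop f U (γ.trans δ) = develop f U γ * develop f U δ := by
  obtain ⟨n, hγ, hδ, hγδ⟩ := ((eventually_fine γ.continuous hU).and <|
    (eventually_fine δ.continuous hU).and <|
    (tendsto_id.const_mul_atTop' two_pos : Tendsto (2 * ·) atTop atTop).eventually
      (eventually_fine (γ.trans δ).continuous hU)).exists
  rw [hf.develop_eq hγ, hf.develop_eq hδ, hf.develop_eq hγδ, gridProd_trans]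

end IsLocalHomOn

end Paths

noncomputable def extension [TopologicalSpace G] [PathConnectedSpace G] [Group G] [Group H]
    (f : G → H) (U : Set G) (g : G) : H :=
  develop f U (PathConnectedSpace.somePath 1 g)

namespace IsLocalHomOn

variable [TopologicalSpace G] [Group G] [IsTopologicalGroup G] [Group H] {f : G → H} {U : Set G}

lemma extension_eq [SimplyConnectedSpace G] (hf : IsLocalHomOn f U) (hU : U ∈ 𝓝 1) {g : G}
    (γ : Path 1 g) : extension f U g = develop f U γ :=
  hf.develop_eq_of_homotopic hU (SimplyConnectedSpace.paths_homotopic _ _)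

lemma extension_mul [SimplyConnectedSpace G] (hf : IsLocalHomOn f U) (hU : U ∈ 𝓝 1) (a b : G) :
    extension f U (a * b) = extension f U a * extension f U b := by
  let γ := PathConnectedSpace.somePath (1 : G) a
  let δ := PathConnectedSpace.somePath (1 : G) b
  let aδ : Path a (a * b) := (δ.map (continuous_const_mul a)).cast (mul_one a).symm rfl
  rw [hf.extension_eq hU (γ.trans aδ), hf.develop_trans hU, extension, extension]
  congr 1
  exact develop_mul_left f U a δ

lemma eventually_extension_eq [SimplyConnectedSpace G] [LocallyPathConnectedSpace G]
    (hf : IsLocalHomOn f U) (hU : U ∈ 𝓝 1) :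
    ∀ᶠ x in 𝓝 1, extension f U x = f x := by
  obtain ⟨W, hW1, hW⟩ := exists_nhds_one_inv_mul_mul_mem hU
  have h1W : (1 : G) ∈ W := mem_of_mem_nhds hW1
  filter_upwards [pathComponentIn_mem_nhds hW1] with x hx
  rw [hf.extension_eq hU hx.somePath, hf.develop_eq_of_forall_mem fun s t => by
    simpa using hW _ (hx.somePath_mem s) _ (hx.somePath_mem t) 1 h1W]
  simp

lemma eqOn_of_eventually_eq (hf : IsLocalHomOn f U) (hU : IsPreconnected U) (F : G →* H)
    (hF : ∀ᶠ x in 𝓝 1, x ∈ U ∧ F x = f x) : EqOn F f U := by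
  have hprop : ∀ x ∈ U, ∀ y ∈ U, x⁻¹ * y ∈ U ∧ F (x⁻¹ * y) = f (x⁻¹ * y) →
      F x = f x → F y = f y := by
    intro x hx y hy hxy hFx
    rw [← mul_inv_cancel_left x y, _root_.map_mul F, hFx, hxy.2,
      ← hf.map_mul _ _ hx hxy.1 (by simpa using hy)]
  intro y hy
  refine hU.induction₂' (fun x y => F x = f x → F y = f y) (fun x hx => ?_)
    (fun x y z _ _ _ hxy hyz => hyz ∘ hxy) hf.one_mem hy (by simp [hf.map_one])
  have hright := ((continuous_const_mul x⁻¹).tendsto' x 1 (inv_mul_cancel x)).eventually hF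
  have hleft :=
    ((continuous_inv.mul continuous_const).tendsto' x 1 (inv_mul_cancel x)).eventually hF
  filter_upwards [nhdsWithin_le_nhds hright, nhdsWithin_le_nhds hleft, self_mem_nhdsWithin]
    with z hxz hzx hz
  exact ⟨hprop x hx z hz hxz, hprop z hz x hx hzx⟩

end IsLocalHomOn

lemma _root_.MonoidHom.eq_of_eqOn_of_mem_nhds_one [TopologicalSpace G] [Group G]
    [IsTopologicalGroup G] [ConnectedSpace G] [Monoid H] {F F' : G →* H} {U : Set G}
    (hU : U ∈ 𝓝 1) (h : EqOn F F' U) : F = F' := by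
  have hopen : IsOpen (F.eqLocus F' : Set G) :=
    Subgroup.isOpen_of_mem_nhds _ (mem_of_superset hU h)
  have huniv : (F.eqLocus F' : Set G) = univ :=
    IsClopen.eq_univ ⟨Subgroup.isClosed_of_isOpen _ hopen, hopen⟩ ⟨1, one_mem _⟩
  ext x
  exact (huniv.symm ▸ mem_univ x : x ∈ (F.eqLocus F' : Set G))

end LocalHomExt

open LocalHomExt in
theorem local_hom_extends_general
    {G H : Type} [TopologicalSpace G] [Group G] [IsTopologicalGroup G]
    [TopologicalSpace H] [Group H] [IsTopologicalGroup H]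
    [SimplyConnectedSpace G] [LocallyPathConnectedSpace G]
    (U : Set G) (hU : IsOpen U) (h1U : (1 : G) ∈ U)
    (hconn : IsConnected U)
    (f : G → H) (hf : ContinuousOn f U)
    (hhom : ∀ x y : G, x ∈ U → y ∈ U → x * y ∈ U → f (x * y) = f x * f y) :
    ∃! F : G →* H, Continuous F ∧ ∀ x ∈ U, F x = f x := by
  have hloc : IsLocalHomOn f U := ⟨h1U, hhom⟩
  have hU1 : U ∈ 𝓝 (1 : G) := hU.mem_nhds h1U
  let F : G →* H := MonoidHom.mk' (extension f U) (hloc.extension_mul hU1)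
  have hFf : ∀ᶠ x in 𝓝 1, x ∈ U ∧ F x = f x :=
    Filter.Eventually.and hU1 (hloc.eventually_extension_eq hU1)
  have hFU : EqOn F f U := hloc.eqOn_of_eventually_eq hconn.isPreconnected F hFf
  refine ⟨F, ⟨continuous_of_continuousAt_one F ((hf.continuousAt hU1).congr ?_), hFU⟩, ?_⟩
  · filter_upwards [hFf] with x hx using hx.2.symm
  · rintro F' ⟨-, hF'⟩
    exact MonoidHom.eq_of_eqOn_of_mem_nhds_one hU1 fun x hx => (hF' x hx).trans (hFU hx).symm

/-- a continuous local homomorphism `f`, defined on a symmetric open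
connected neighbourhood `U` of the identity of a simply connected topological group `G`,
with values in a topological group `H`, extends uniquely to a continuous group
homomorphism `G →* H`. -/
theorem local_hom_extends
    {G H : Type} [TopologicalSpace G] [Group G] [IsTopologicalGroup G]
    [TopologicalSpace H] [Group H] [IsTopologicalGroup H]
    [SimplyConnectedSpace G] [LocallyPathConnectedSpace G]
    (U : Set G) (hU : IsOpen U) (h1U : (1 : G) ∈ U) (hsymm : U⁻¹ = U)
    (hconn : IsConnected U)
    (f : G → H) (hf : ContinuousOn f U)
    (hhom : ∀ x y : G, x ∈ U → y ∈ U → x * y ∈ U → f (x * y) = f x * f y) :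
    ∃! F : G →* H, Continuous F ∧ ∀ x ∈ U, F x = f x :=
  local_hom_extends_general U hU h1U hconn f hf hhom
end

section
/- Two simply connected topological groups that are locally isomorphic are isomorphic as topological groups. -/
/-!
Give `G × H` the topology whose basic neighbourhoods of `e` are the translates
`e · {(w, f w) | w near 1}` of the graph of `f`. Since `f` is multiplicative near `1` this is
consistent, and the projection to `G` is a covering map, with `H` acting on the second factor as
deck group. As `G` is simply connected and locally path connected, the identity of `G` lifts to a
continuous section `s` with `s 1 = 1`; uniqueness of lifts gives `s (a * x) = s a * s x`, so the
second component of `s` is a continuous homomorphism `F : G → H` agreeing with `f` near `1`.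
Doing the same for `g`, both composites of the two extensions are homomorphisms that are the
identity near `1`, hence everywhere because the groups are connected.
-/

open Filter Topology

variable {G H : Type*} [Group G] [Group H]

theorem eventually_eventually_map_mul_of_mem_nhds [TopologicalSpace G] [ContinuousMul G]
    {U : Set G} (hU : U ∈ 𝓝 1) {f : G → H}
    (hf : ∀ x y, x ∈ U → y ∈ U → x * y ∈ U → f (x * y) = f x * f y) :
    ∀ᶠ v in 𝓝 (1 : G), ∀ᶠ w in 𝓝 (1 : G), f (v * w) = f v * f w := by
  have hmul : ∀ᶠ p : G × G in 𝓝 (1, 1), p.1 * p.2 ∈ U :=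
    continuous_mul.continuousAt.preimage_mem_nhds (by simpa using hU)
  filter_upwards [hU, hmul.curry_nhds] with v hv hvw
  filter_upwards [hU, hvw] with w hw hvw using hf v w hv hw hvw

def EtaleGraph (_f : G → H) : Type _ := G × H

namespace EtaleGraph

variable (f : G → H)

instance : Group (EtaleGraph f) := inferInstanceAs (Group (G × H))

instance : MulAction H (EtaleGraph f) :=
  MulAction.compHom (M := EtaleGraph f) (EtaleGraph f) (MonoidHom.inr G H)

def proj : EtaleGraph f →* G := MonoidHom.fst G H

def snd : EtaleGraph f →* H := MonoidHom.snd G H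

def graph (w : G) : EtaleGraph f := (w, f w)

variable {f}

@[simp] lemma proj_graph (w : G) : proj f (graph f w) = w := rfl

@[simp] lemma snd_graph (w : G) : snd f (graph f w) = f w := rfl

lemma proj_smul (h : H) (e : EtaleGraph f) : proj f (h • e) = proj f e := one_mul (proj f e)

lemma snd_smul (h : H) (e : EtaleGraph f) : snd f (h • e) = h * snd f e := rfl

lemma ext {e e' : EtaleGraph f} (h₁ : proj f e = proj f e') (h₂ : snd f e = snd f e') : e = e' :=
  Prod.ext h₁ h₂

variable [TopologicalSpace G]

instance : TopologicalSpace (EtaleGraph f) :=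
  .mkOfNhds fun e ↦ map (fun w ↦ e * graph f w) (𝓝 1)

variable [IsTopologicalGroup G] (hf : ∀ᶠ v in 𝓝 (1 : G), ∀ᶠ w in 𝓝 (1 : G), f (v * w) = f v * f w)
include hf

lemma nhds_eq (e : EtaleGraph f) : 𝓝 e = map (fun w ↦ e * graph f w) (𝓝 1) := by
  refine TopologicalSpace.nhds_mkOfNhds _ _ (fun e s hs ↦ ?_) fun e s hs ↦ ?_
  · have h1 : f (1 * 1) = f 1 * f 1 := hf.self_of_nhds.self_of_nhds
    have hgraph1 : graph f 1 = 1 := ext rfl (by simpa using h1)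
    simpa [hgraph1] using mem_of_mem_nhds (mem_map.1 hs)
  · have hgraph : ∀ᶠ v in 𝓝 (1 : G), ∀ᶠ w in 𝓝 (1 : G),
        graph f v * graph f w = graph f (v * w) := by
      filter_upwards [hf] with v hv
      filter_upwards [hv] with w hw using ext rfl hw.symm
    have hs' : ∀ᶠ p : G × G in 𝓝 (1, 1), e * graph f (p.1 * p.2) ∈ s :=
      (continuous_mul.tendsto' (1, 1) 1 (mul_one 1)).eventually (mem_map.1 hs)
    refine eventually_map.2 ?_
    filter_upwards [hgraph, hs'.curry_nhds] with v hv hvs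
    refine mem_map.2 ?_
    filter_upwards [hv, hvs] with w hw hws
    show e * graph f v * graph f w ∈ s
    rwa [mul_assoc, hw]

lemma map_mul_left_nhds (c e : EtaleGraph f) : map (c * ·) (𝓝 e) = 𝓝 (c * e) := by
  simp only [nhds_eq hf, map_map, Function.comp_def, mul_assoc]

lemma continuous_mul_left (c : EtaleGraph f) : Continuous (c * ·) :=
  continuous_iff_continuousAt.2 fun e ↦ (map_mul_left_nhds hf c e).le

lemma map_proj_nhds (e : EtaleGraph f) : map (proj f) (𝓝 e) = 𝓝 (proj f e) := by
  simp only [nhds_eq hf, map_map, Function.comp_def, map_mul, proj_graph]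
  exact map_mul_left_nhds_one _

lemma isOpenQuotientMap_proj : IsOpenQuotientMap (proj f) where
  surjective x := ⟨(x, 1), rfl⟩
  continuous := continuous_iff_continuousAt.2 fun e ↦ (map_proj_nhds hf e).le
  isOpenMap := .of_nhds_le fun e ↦ (map_proj_nhds hf e).ge

lemma isQuotientCoveringMap_proj : IsQuotientCoveringMap (proj f) H where
  __ := (isOpenQuotientMap_proj hf).isQuotientMap
  continuous_const_smul h := continuous_mul_left hf (MonoidHom.inr G H h)
  apply_eq_iff_mem_orbit {e₁ e₂} := by
    refine ⟨fun h ↦ ⟨snd f e₁ * (snd f e₂)⁻¹, ext ?_ ?_⟩, ?_⟩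
    · rw [proj_smul, h]
    · rw [snd_smul, inv_mul_cancel_right]
    · rintro ⟨h, rfl⟩
      exact proj_smul h e₂
  disjoint e := by
    refine ⟨Set.range (e * graph f ·), by rw [nhds_eq hf]; exact range_mem_map, ?_⟩
    rintro h ⟨_, ⟨_, ⟨v, rfl⟩, rfl⟩, w, hw⟩
    obtain rfl : v = w := by simpa [proj_smul] using (congr_arg (proj f) hw).symm
    simpa [snd_smul] using congr_arg (snd f) hw

theorem exists_continuous_section [SimplyConnectedSpace G] [LocallyPathConnectedSpace G] :
    ∃ s : G →* EtaleGraph f, Continuous s ∧ ∀ x, proj f (s x) = x := by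
  have cov := (isQuotientCoveringMap_proj hf).isCoveringMap
  obtain ⟨s, ⟨hs1, hsp⟩, -⟩ :=
    cov.existsUnique_continuousMap_lifts (ContinuousMap.id G) 1 1 (map_one _)
  have hsp' (x : G) : proj f (s x) = x := congr_fun hsp x
  -- `s (a * ·)` and `s a * s ·` are lifts of `a * ·` taking the value `s a` at `1`.
  have hs_mul (a x : G) : s (a * x) = s a * s x := by
    have huniq := cov.existsUnique_continuousMap_lifts (ContinuousMap.mulLeft a) 1 (s a)
      (by simp [hsp'])
    refine DFunLike.congr_fun (huniq.unique (y₁ := s.comp (ContinuousMap.mulLeft a))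
      (y₂ := ⟨fun x ↦ s a * s x, (continuous_mul_left hf _).comp s.continuous⟩) ?_ ?_) x
    · exact ⟨by simp, funext fun x ↦ by simp [hsp']⟩
    · exact ⟨by simp [hs1], funext fun x ↦ by simp [hsp']⟩
  exact ⟨MonoidHom.mk' s hs_mul, s.continuous, hsp'⟩

end EtaleGraph

section TopologicalGroup

variable [TopologicalSpace G] [IsTopologicalGroup G]

theorem exists_monoidHom_eventuallyEq_of_eventually_map_mul [SimplyConnectedSpace G]
    [LocallyPathConnectedSpace G] {f : G → H}
    (hf : ∀ᶠ v in 𝓝 (1 : G), ∀ᶠ w in 𝓝 (1 : G), f (v * w) = f v * f w) :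
    ∃ F : G →* H, ⇑F =ᶠ[𝓝 1] f := by
  obtain ⟨s, hs, hsp⟩ := EtaleGraph.exists_continuous_section hf
  refine ⟨(EtaleGraph.snd f).comp s, ?_⟩
  have hsheet : Set.range (EtaleGraph.graph f) ∈ 𝓝 (s 1) := by
    rw [map_one, EtaleGraph.nhds_eq hf]
    simpa only [one_mul] using range_mem_map
  filter_upwards [hs.continuousAt.preimage_mem_nhds hsheet] with x ⟨w, hw⟩
  obtain rfl : w = x := by simpa using congr_arg (EtaleGraph.proj f) hw |>.trans (hsp x)
  simp [← hw]

theorem MonoidHom.eq_of_eventuallyEq_nhds_one [PreconnectedSpace G] {F₁ F₂ : G →* H}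
    (h : ⇑F₁ =ᶠ[𝓝 1] F₂) : F₁ = F₂ := by
  have hopen : IsOpen (F₁.eqLocus F₂ : Set G) := Subgroup.isOpen_of_mem_nhds _ h
  have huniv : (F₁.eqLocus F₂ : Set G) = Set.univ :=
    IsClopen.eq_univ ⟨Subgroup.isClosed_of_isOpen _ hopen, hopen⟩ ⟨1, one_mem _⟩
  exact MonoidHom.ext (Set.eq_univ_iff_forall.1 huniv)

theorem MonoidHom.comp_eq_id_of_eventuallyEq [PreconnectedSpace G] [TopologicalSpace H]
    {F : G →* H} {F' : H →* G} (hF : Continuous F) {f : G → H} {g : H → G}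
    (hFf : ⇑F =ᶠ[𝓝 1] f) (hF'g : ⇑F' =ᶠ[𝓝 1] g) {U : Set G} (hU : U ∈ 𝓝 1) {V : Set H}
    (hV : V ∈ 𝓝 1) (hgf : ∀ x ∈ U, f x ∈ V → g (f x) = x) :
    F'.comp F = MonoidHom.id G := by
  have hF1 : Tendsto F (𝓝 1) (𝓝 1) := hF.tendsto' 1 1 (map_one F)
  refine MonoidHom.eq_of_eventuallyEq_nhds_one ?_
  filter_upwards [hU, hFf, hF1 hV, hF1.eventually hF'g] with x hxU hFx hFxV hF'Fx
  rw [MonoidHom.comp_apply, hF'Fx, hFx, MonoidHom.id_apply, hgf x hxU (hFx ▸ hFxV)]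

theorem exists_continuous_monoidHom_eventuallyEq [SimplyConnectedSpace G]
    [LocallyPathConnectedSpace G] [TopologicalSpace H] [IsTopologicalGroup H] {U : Set G}
    (hU : U ∈ 𝓝 1) {f : G → H} (hf : ContinuousAt f 1)
    (hfhom : ∀ x y, x ∈ U → y ∈ U → x * y ∈ U → f (x * y) = f x * f y) :
    ∃ F : G →* H, Continuous F ∧ ⇑F =ᶠ[𝓝 1] f := by
  obtain ⟨F, hFf⟩ := exists_monoidHom_eventuallyEq_of_eventually_map_mul
    (eventually_eventually_map_mul_of_mem_nhds hU hfhom)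
  exact ⟨F, continuous_of_continuousAt_one F (hf.congr hFf.symm), hFf⟩

end TopologicalGroup

/-- two simply connected (path-connected, locally path-connected)
topological groups which are locally isomorphic — i.e. admit mutually inverse continuous
local homomorphisms defined on open neighbourhoods of the identities — are isomorphic as
topological groups. -/
theorem locally_isomorphic_simply_connected_groups_isomorphic
    {G H : Type} [TopologicalSpace G] [Group G] [IsTopologicalGroup G]
    [TopologicalSpace H] [Group H] [IsTopologicalGroup H]
    [SimplyConnectedSpace G] [LocallyPathConnectedSpace G]
    [SimplyConnectedSpace H] [LocallyPathConnectedSpace H]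
    (U : Set G) (hU : IsOpen U) (h1U : (1 : G) ∈ U)
    (V : Set H) (hV : IsOpen V) (h1V : (1 : H) ∈ V)
    (f : G → H) (hf : ContinuousOn f U)
    (g : H → G) (hg : ContinuousOn g V)
    (hfhom : ∀ x y : G, x ∈ U → y ∈ U → x * y ∈ U → f (x * y) = f x * f y)
    (hghom : ∀ x y : H, x ∈ V → y ∈ V → x * y ∈ V → g (x * y) = g x * g y)
    (hgf : ∀ x ∈ U, f x ∈ V → g (f x) = x)
    (hfg : ∀ y ∈ V, g y ∈ U → f (g y) = y) :
    ∃ e : G ≃* H, Continuous e ∧ Continuous e.symm := by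
  have hUn := hU.mem_nhds h1U
  have hVn := hV.mem_nhds h1V
  obtain ⟨F, hF, hFf⟩ := exists_continuous_monoidHom_eventuallyEq hUn (hf.continuousAt hUn) hfhom
  obtain ⟨F', hF', hF'g⟩ :=
    exists_continuous_monoidHom_eventuallyEq hVn (hg.continuousAt hVn) hghom
  exact ⟨F.toMulEquiv F' (MonoidHom.comp_eq_id_of_eventuallyEq hF hFf hF'g hUn hVn hgf)
    (MonoidHom.comp_eq_id_of_eventuallyEq hF' hF'g hFf hVn hUn hfg), hF, hF'⟩
end

section
/- Let X be a path-connected topological abelian group and m a positive integer such that the multiplication-by-m map m : X → X is a covering map. Then the induced map m₊ on π₁(X, 0) is multiplication by m, and the m-torsion subgroup X[m] is isomorphic to π₁(X, 0) / m·π₁(X, 0). -/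
open CategoryTheory

/-- Transport of fundamental groups along an equality of basepoints. -/
noncomputable def castπ {X : Type} [TopologicalSpace X] {a b : X} (h : a = b) :
    FundamentalGroup X a →* FundamentalGroup X b := by
  subst h; exact MonoidHom.id _

/-- The endomorphism of `π₁(X, 0)` induced by the continuous map `x ↦ m • x` on a
topological additive group `X` (which fixes the basepoint `0`). -/
noncomputable def nsmulStar {X : Type} [TopologicalSpace X] [AddCommGroup X]
    [IsTopologicalAddGroup X] (m : ℕ) :
    FundamentalGroup X (0 : X) →* FundamentalGroup X (0 : X) :=
  (castπ (smul_zero m : m • (0 : X) = 0)).comp (inducedHom (continuous_nsmul m) (0 : X))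

/-!
Pointwise addition of loops in a topological group is homotopic to their concatenation
(Eckmann–Hilton: `a + b ≃ (a ⬝ 0) + (0 ⬝ b) = (a + 0) ⬝ (0 + b)`), so the loop `t ↦ m • γ t`
represents `[γ] ^ m`. The map `x ↦ m • x` is a homomorphism and a covering map, hence the quotient
of `X` by the translation action of its discrete kernel `X[m]`. Sending a loop at `0` to the
endpoint of its lift starting at `0` is therefore a surjection `π₁(X, 0) → X[m]` (as `X` is path
connected) whose kernel is the image of `π₁(X, 0)` under `x ↦ m • x`, that is `m • π₁(X, 0)`.
-/

namespace Path

variable {M : Type*} [TopologicalSpace M]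

section Add

variable [Add M] [ContinuousAdd M]

theorem trans_add_trans {x y z x' y' z' : M} (a : Path x y) (a' : Path y z) (b : Path x' y')
    (b' : Path y' z') : (a.trans a').add (b.trans b') = (a.add b).trans (a'.add b') := by
  ext t
  simp only [add_apply, trans_apply]
  split_ifs <;> rfl

theorem Homotopic.add {x y x' y' : M} {a a' : Path x y} {b b' : Path x' y'}
    (ha : a.Homotopic a') (hb : b.Homotopic b') : (a.add b).Homotopic (a'.add b') :=
  ha.map2 (fun F G => (Homotopic.prodHomotopy F G).map ⟨_, continuous_add⟩) hb

theorem add_homotopic_trans {x y x' y' : M} (a : Path x y) (b : Path x' y') :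
    (a.add b).Homotopic ((a.add (refl x')).trans ((refl y).add b)) := by
  rw [← trans_add_trans]
  exact (Homotopic.trans_refl a).symm.add (Homotopic.refl_trans b).symm

end Add

theorem add_cast_homotopic_trans [AddZeroClass M] [ContinuousAdd M] (a b : Path (0 : M) 0) :
    ((a.add b).cast (add_zero 0).symm (add_zero 0).symm).Homotopic (a.trans b) := by
  have h : ((a.add (refl 0)).trans ((refl 0).add b)).cast (add_zero (0 : M)).symm
      (add_zero (0 : M)).symm = a.trans b := by
    ext t
    simp only [cast_coe, trans_apply, add_apply, refl_apply]
    split_ifs <;> simp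
  exact h ▸ (add_homotopic_trans a b).pathCast _ _

end Path

namespace FundamentalGroup

theorem mapOfEq_add {Y M : Type*} [TopologicalSpace Y] [TopologicalSpace M] [AddZeroClass M]
    [ContinuousAdd M] (f g : C(Y, M)) {y : Y} (hf : f y = 0) (hg : g y = 0)
    (σ : FundamentalGroup Y y) :
    mapOfEq (f + g) (by simp [hf, hg]) σ = mapOfEq g hg σ * mapOfEq f hf σ := by
  induction σ using Path.Homotopic.Quotient.ind with | mk γ =>
  simp only [mapOfEq_apply, mul_def, ← Path.Homotopic.Quotient.mk_map,
    ← Path.Homotopic.Quotient.mk_cast, ← Path.Homotopic.Quotient.mk_trans]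
  set a := (γ.map f.continuous).cast hf.symm hf.symm
  set b := (γ.map g.continuous).cast hg.symm hg.symm
  have h : (γ.map (f + g).continuous).cast (by simp [hf, hg]) (by simp [hf, hg]) =
      (a.add b).cast (add_zero 0).symm (add_zero 0).symm := rfl
  exact Path.Homotopic.Quotient.eq.mpr (h ▸ Path.add_cast_homotopic_trans a b)

theorem mapOfEq_id {Y : Type*} [TopologicalSpace Y] {y : Y} (h : ContinuousMap.id Y y = y)
    (σ : FundamentalGroup Y y) : mapOfEq (ContinuousMap.id Y) h σ = σ := by
  induction σ using Path.Homotopic.Quotient.ind with | mk γ =>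
  rw [mapOfEq_apply]
  rfl

theorem mapOfEq_nsmul {M : Type*} [TopologicalSpace M] [AddMonoid M] [ContinuousAdd M] (n : ℕ)
    (σ : FundamentalGroup M 0) :
    mapOfEq ⟨(n • ·), continuous_nsmul n⟩ (smul_zero n) σ = σ ^ n := by
  induction n with
  | zero =>
    induction σ using Path.Homotopic.Quotient.ind with | mk γ =>
    rw [pow_zero, one_def, mapOfEq_apply, ← Path.Homotopic.Quotient.mk_map,
      ← Path.Homotopic.Quotient.mk_cast, ← Path.Homotopic.Quotient.mk_refl]
    congr 1
    ext t
    simp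
  | succ n ih =>
    have h : (⟨((n + 1) • ·), continuous_nsmul (n + 1)⟩ : C(M, M)) =
        ⟨(n • ·), continuous_nsmul n⟩ + ContinuousMap.id M := by
      ext x
      simp [succ_nsmul]
    simp only [h]
    rw [mapOfEq_add _ _ (smul_zero n) (ContinuousMap.id_apply 0), mapOfEq_id, ih, pow_succ']

end FundamentalGroup

theorem castπ_comp_inducedHom {X Y : Type} [TopologicalSpace X] [TopologicalSpace Y]
    {f : X → Y} (hf : Continuous f) {x : X} {y : Y} (h : f x = y) :
    (castπ h).comp (inducedHom hf x) = FundamentalGroup.mapOfEq ⟨f, hf⟩ h := by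
  subst h
  ext σ
  induction σ using Path.Homotopic.Quotient.ind with | mk γ =>
  rw [FundamentalGroup.mapOfEq_apply]
  rfl

theorem nsmulStar_eq_mapOfEq {X : Type} [TopologicalSpace X] [AddCommGroup X]
    [IsTopologicalAddGroup X] (m : ℕ) :
    nsmulStar m = FundamentalGroup.mapOfEq ⟨nsmulAddMonoidHom (α := X) m, continuous_nsmul m⟩
      (map_zero (nsmulAddMonoidHom m)) :=
  castπ_comp_inducedHom _ _

theorem nsmulStar_apply {X : Type} [TopologicalSpace X] [AddCommGroup X]
    [IsTopologicalAddGroup X] (m : ℕ) (σ : FundamentalGroup X 0) : nsmulStar m σ = σ ^ m := by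
  rw [nsmulStar_eq_mapOfEq]
  exact FundamentalGroup.mapOfEq_nsmul m σ

theorem IsCoveringMap.surjective_of_pathConnectedSpace {E X : Type*} [TopologicalSpace E]
    [TopologicalSpace X] [PathConnectedSpace X] [Nonempty E] {p : E → X}
    (cov : IsCoveringMap p) : Function.Surjective p := by
  intro x
  obtain ⟨e⟩ := ‹Nonempty E›
  let γ := PathConnectedSpace.somePath (p e) x
  exact ⟨cov.liftPath γ e γ.source 1,
    (congr_fun (cov.liftPath_lifts γ e γ.source) 1).trans γ.target⟩

theorem IsCoveringMap.isAddQuotientCoveringMap_ker {E X : Type*} [TopologicalSpace E]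
    [AddGroup E] [IsTopologicalAddGroup E] [TopologicalSpace X] [AddGroup X]
    {f : E →+ X} (cov : IsCoveringMap f) (hf : Function.Surjective f) :
    IsAddQuotientCoveringMap f f.ker :=
  (cov.isQuotientMap hf).isAddQuotientCoveringMap_of_isDiscrete_ker_addMonoidHom
    ⟨(cov 0).discreteTopology_fiber⟩

/-- `φ` sends a loop at `0` to the endpoint of its lift starting at `0`. -/
theorem IsCoveringMap.exists_fundamentalGroup_hom_onto_ker {E X : Type*} [TopologicalSpace E]
    [AddCommGroup E] [IsTopologicalAddGroup E] [PathConnectedSpace E] [TopologicalSpace X]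
    [AddGroup X] {f : E →+ X} (cov : IsCoveringMap f) (hf : Function.Surjective f) :
    ∃ φ : Additive (FundamentalGroup X 0) →+ E, Set.range φ = f.ker ∧ ∀ a, φ a = 0 ↔
      a.toMul ∈ (FundamentalGroup.mapOfEq ⟨f, cov.continuous⟩ (map_zero f)).range := by
  have hq := cov.isAddQuotientCoveringMap_ker hf
  let e : f ⁻¹' {0} := ⟨0, map_zero f⟩
  let ψ := MulOpposite.opMulEquiv.symm.toMonoidHom.comp (hq.fundamentalGroupToMulOpposite e)
  have hψ : Function.Surjective ψ :=
    MulOpposite.opMulEquiv.symm.surjective.comp (hq.fundamentalGroupToMulOpposite_surjective e)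
  have hψ' : Function.Surjective (MonoidHom.toAdditiveLeft ψ) := fun g => by
    obtain ⟨σ, hσ⟩ := hψ (Multiplicative.ofAdd g)
    exact ⟨Additive.ofMul σ, congrArg Multiplicative.toAdd hσ⟩
  refine ⟨f.ker.subtype.comp (MonoidHom.toAdditiveLeft ψ), ?_, fun a => ?_⟩
  · rw [AddMonoidHom.coe_comp, Set.range_comp, hψ'.range_eq, Set.image_univ,
      AddSubgroup.coe_subtype, Subtype.range_coe]
  · rw [AddMonoidHom.comp_apply, AddSubgroup.coe_subtype, ZeroMemClass.coe_eq_zero]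
    change Multiplicative.toAdd (ψ a.toMul) = 0 ↔ _
    rw [toAdd_eq_zero, MonoidHom.comp_apply, MulEquiv.coe_toMonoidHom, MulEquiv.map_eq_one_iff,
      ← MonoidHom.mem_ker, hq.ker_fundamentalGroupToMulOpposite, hq.ker_monodromyPerm e]

theorem torsion_iso_pi1_mod_m_general
    {X : Type} [TopologicalSpace X] [AddCommGroup X] [IsTopologicalAddGroup X]
    [PathConnectedSpace X]
    (m : ℕ) (hcov : IsCoveringMap fun x : X => m • x) :
    (∀ σ : FundamentalGroup X (0 : X), nsmulStar m σ = σ ^ m) ∧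
      ∃ φ : Additive (FundamentalGroup X (0 : X)) →+ X,
        Set.range φ = {x : X | m • x = 0} ∧
        ∀ a : Additive (FundamentalGroup X (0 : X)), φ a = 0 ↔ ∃ b, a = m • b := by
  refine ⟨nsmulStar_apply m, ?_⟩
  have hcov' : IsCoveringMap (nsmulAddMonoidHom (α := X) m) := hcov
  obtain ⟨φ, hrange, hker⟩ := hcov'.exists_fundamentalGroup_hom_onto_ker
    hcov'.surjective_of_pathConnectedSpace
  refine ⟨φ, hrange, fun a => ?_⟩
  rw [hker, ← nsmulStar_eq_mapOfEq]
  simp only [MonoidHom.mem_range, nsmulStar_apply]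
  exact ⟨fun ⟨σ, hσ⟩ => ⟨.ofMul σ, by rw [← ofMul_pow, hσ, ofMul_toMul]⟩,
    fun ⟨b, hb⟩ => ⟨b.toMul, by rw [← toMul_nsmul, hb]⟩⟩

/-- let `X` be a path-connected topological abelian group and `m > 0` such
that `x ↦ m • x` is a covering map.  Then the induced endomorphism of `π₁(X, 0)` is
multiplication by `m`, and the `m`-torsion subgroup `X[m]` is isomorphic to
`π₁(X, 0)/m·π₁(X, 0)` — expressed via a homomorphism from (the additivization of)
`π₁(X, 0)` to `X` with image `X[m]` and kernel `m·π₁(X, 0)`. -/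
theorem torsion_iso_pi1_mod_m
    {X : Type} [TopologicalSpace X] [AddCommGroup X] [IsTopologicalAddGroup X]
    [PathConnectedSpace X] [LocallyPathConnectedSpace X]
    (m : ℕ) (hm : 0 < m) (hcov : IsCoveringMap fun x : X => m • x) :
    (∀ σ : FundamentalGroup X (0 : X), nsmulStar m σ = σ ^ m) ∧
      ∃ φ : Additive (FundamentalGroup X (0 : X)) →+ X,
        Set.range φ = {x : X | m • x = 0} ∧
        ∀ a : Additive (FundamentalGroup X (0 : X)), φ a = 0 ↔ ∃ b, a = m • b :=
  torsion_iso_pi1_mod_m_general m hcov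
end
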